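/- Let k be algebraically closed with char k ≠ 2, 3 and let C : x₀³ + x₁³ − 3x₀x₁x₂ = 0. Then the stabilizer of C in PGL(3, k) is generated by the two elements g₁ = Diag(1, ζ₃², ζ₃) and g₂ = the transposition matrix swapping x₀ and x₁ (fixing x₂), where ζ₃ is a primitive third root of unity. In particular this stabilizer is finite. -/

import Mathlib

/-!
The node `(0 : 0 : 1)` is the only singular point of `C`, so every `g` preserving `C` fixes
it: the third column of `g` is `(0, 0, r)`. The tangent cone at the node is the line pair
`x₀ x₁ = 0`, which `g` must permute, so `g` is diagonal or the swap of `x₀, x₁` times a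
diagonal matrix. Comparing the remaining coefficients forces `g = s • diag(1, ω², ω)` with
`ω³ = 1` (possibly after the swap), and `diag(1, ω², ω)` is a power of `diag(1, ζ², ζ)`.
-/

open MvPolynomial Matrix

section

variable {k : Type*} [Field k]

theorem MvPolynomial.IsHomogeneous.aeval_C_mul_X {σ : Type*} {F : MvPolynomial σ k} {d : ℕ}
    (hF : F.IsHomogeneous d) (s : k) :
    MvPolynomial.aeval (fun i => C s * X i) F = s ^ d • F := by
  conv_lhs => rw [F.as_sum]
  conv_rhs => rw [F.as_sum]
  rw [map_sum, Finset.smul_sum]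
  refine Finset.sum_congr rfl fun u hu => ?_
  rw [aeval_monomial, monomial_eq, ← hF (mem_support_iff.1 hu)]
  simp only [Finsupp.prod, mul_pow, Finset.prod_mul_distrib, Finset.prod_pow_eq_pow_sum,
    Finsupp.weight_apply, Finsupp.sum, smul_eq_C_mul, algebraMap_eq, map_pow,
    prod_X_pow_eq_monomial, Pi.one_apply, smul_eq_mul, mul_one]
  ring

section LinearSubstitution

variable {σ : Type*} [Fintype σ]

noncomputable def linSubst (g : Matrix σ σ k) : σ → MvPolynomial σ k :=
  fun i => ∑ j, C (g i j) * X j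

theorem aeval_linSubst_mul (g h : Matrix σ σ k) (F : MvPolynomial σ k) :
    aeval (linSubst (g * h)) F = aeval (linSubst h) (aeval (linSubst g) F) := by
  rw [← AlgHom.comp_apply, comp_aeval]
  congr 2
  funext i
  simp only [linSubst, map_sum, map_mul, aeval_X, aeval_C, algebraMap_eq, mul_apply,
    Finset.mul_sum, Finset.sum_mul]
  rw [Finset.sum_comm]
  simp only [mul_assoc]

theorem eval_aeval_linSubst (g : Matrix σ σ k) (F : MvPolynomial σ k) (v : σ → k) :
    eval v (aeval (linSubst g) F) = eval (g *ᵥ v) F := by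
  change aeval v (aeval (linSubst g) F) = aeval (g *ᵥ v) F
  rw [comp_aeval_apply]
  congr 2
  funext i
  simp [linSubst, mulVec, dotProduct]

variable [DecidableEq σ]

theorem linSubst_one : linSubst (1 : Matrix σ σ k) = X := by
  funext i
  simp [linSubst, one_apply]

theorem linSubst_diagonal (d : σ → k) : linSubst (diagonal d) = fun i => C (d i) * X i := by
  funext i
  simp [linSubst, diagonal_apply, apply_ite C]

/-- The preimage in `Matrix σ σ k` of the stabilizer of `V(F)` in `PGL`; it also contains
non-invertible matrices when `F` is degenerate. -/
def stabilizerUpToScalar (F : MvPolynomial σ k) : Submonoid (Matrix σ σ k) where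
  carrier := {g | ∃ c : k, c ≠ 0 ∧ aeval (linSubst g) F = c • F}
  one_mem' := ⟨1, one_ne_zero, by rw [linSubst_one, aeval_X_left_apply, one_smul]⟩
  mul_mem' := by
    rintro g h ⟨c, hc, hg⟩ ⟨d, hd, hh⟩
    exact ⟨c * d, mul_ne_zero hc hd, by rw [aeval_linSubst_mul, hg, map_smul, hh, smul_smul]⟩

theorem smul_mem_stabilizerUpToScalar_iff {F : MvPolynomial σ k} {d : ℕ}
    (hF : F.IsHomogeneous d) {s : k} (hs : s ≠ 0) {g : Matrix σ σ k} :
    s • g ∈ stabilizerUpToScalar F ↔ g ∈ stabilizerUpToScalar F := by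
  have scalar_mem {t : k} (ht : t ≠ 0) : t • (1 : Matrix σ σ k) ∈ stabilizerUpToScalar F :=
    ⟨t ^ d, pow_ne_zero d ht, by rw [smul_one_eq_diagonal, linSubst_diagonal, hF.aeval_C_mul_X]⟩
  refine ⟨fun h => ?_, fun h => ?_⟩
  · simpa [smul_smul, hs] using mul_mem (scalar_mem (inv_ne_zero hs)) h
  · simpa using mul_mem (scalar_mem hs) h

end LinearSubstitution

noncomputable def nodalCubic (k : Type*) [Field k] : MvPolynomial (Fin 3) k :=
  X 0 ^ 3 + X 1 ^ 3 - 3 * (X 0 * X 1 * X 2)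

def nodalForm (x y z : k) : k :=
  x ^ 3 + y ^ 3 - 3 * (x * y * z)

theorem isHomogeneous_nodalCubic : (nodalCubic k).IsHomogeneous 3 := by
  have h3 : (3 : MvPolynomial (Fin 3) k).IsHomogeneous 0 := by
    rw [← map_ofNat C 3]
    exact isHomogeneous_C _ _
  exact ((isHomogeneous_X_pow 0 3).add (isHomogeneous_X_pow 1 3)).sub
    (h3.mul (((isHomogeneous_X k 0).mul (isHomogeneous_X k 1)).mul (isHomogeneous_X k 2)))

theorem eval_nodalCubic (v : Fin 3 → k) :
    eval v (nodalCubic k) = nodalForm (v 0) (v 1) (v 2) := by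
  simp [nodalCubic, nodalForm]

theorem eval_aeval_linSubst_nodalCubic (a b m d e f p q r x y z : k) :
    eval ![x, y, z] (aeval (linSubst !![a, b, m; d, e, f; p, q, r]) (nodalCubic k)) =
      nodalForm (a * x + b * y + m * z) (d * x + e * y + f * z) (p * x + q * y + r * z) := by
  rw [eval_aeval_linSubst, eval_nodalCubic]
  simp [mul_comm, add_assoc]

theorem diagonal_mem_stabilizerUpToScalar_nodalCubic {ω : k} (hω : ω ^ 3 = 1) :
    diagonal ![1, ω ^ 2, ω] ∈ stabilizerUpToScalar (nodalCubic k) := by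
  refine ⟨1, one_ne_zero, ?_⟩
  have hC : C ω ^ 3 = (1 : MvPolynomial (Fin 3) k) := by rw [← map_pow, hω, map_one]
  simp only [linSubst_diagonal, nodalCubic, map_add, map_sub, map_mul, map_pow, map_ofNat,
    aeval_X, cons_val_zero, cons_val_one, cons_val_two, tail_cons, head_cons, map_one, one_mul,
    one_smul]
  linear_combination ((C ω ^ 3 + 1) * X 1 ^ 3 - 3 * (X 0 * X 1 * X 2)) * hC

theorem swap_mem_stabilizerUpToScalar_nodalCubic :
    !![0, 1, 0; 1, 0, 0; 0, 0, 1] ∈ stabilizerUpToScalar (nodalCubic k) := by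
  refine ⟨1, one_ne_zero, ?_⟩
  simp only [nodalCubic, linSubst, Fin.sum_univ_three, map_add, map_sub, map_mul, map_pow,
    map_ofNat, aeval_X, of_apply, cons_val_zero, cons_val_one, cons_val_two, tail_cons, head_cons,
    C_0, C_1, zero_mul, one_mul, zero_add, add_zero, one_smul]
  ring

/-- The `z³`, `xz²`, `yz²` coefficients say `∇F(u) ᵥ* g = 0` for the third column
`u = (m, f, r)` of `g`, so `u` is a singular point of `C`, i.e. the node. -/
theorem nodal_third_column_eq_zero (h6 : (6 : k) ≠ 0) {a b m d e f p q r c : k}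
    (hdet : !![a, b, m; d, e, f; p, q, r].det ≠ 0)
    (hP : ∀ x y z, nodalForm (a * x + b * y + m * z) (d * x + e * y + f * z)
      (p * x + q * y + r * z) = c * nodalForm x y z) :
    m = 0 ∧ f = 0 := by
  simp only [nodalForm] at hP
  have hsing : ![m ^ 2 - f * r, f ^ 2 - m * r, -(m * f)] ᵥ* !![a, b, m; d, e, f; p, q, r] = 0 := by
    have hx : a * (m ^ 2 - f * r) + d * (f ^ 2 - m * r) + p * -(m * f) = 0 :=
      mul_left_cancel₀ h6 (by linear_combination hP 1 0 1 + hP 1 0 (-1) - 2 * hP 1 0 0)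
    have hy : b * (m ^ 2 - f * r) + e * (f ^ 2 - m * r) + q * -(m * f) = 0 :=
      mul_left_cancel₀ h6 (by linear_combination hP 0 1 1 + hP 0 1 (-1) - 2 * hP 0 1 0)
    have hz : m * (m ^ 2 - f * r) + f * (f ^ 2 - m * r) + r * -(m * f) = 0 := by
      linear_combination hP 0 0 1
    ext j
    fin_cases j <;> simp only [vecMul, vec3_dotProduct, of_apply, cons_val_zero, cons_val_one,
      cons_val_two, tail_cons, head_cons, Pi.zero_apply, Fin.zero_eta, Fin.mk_one, Fin.reduceFinMk]
    · linear_combination hx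
    · linear_combination hy
    · linear_combination hz
  have hw := eq_zero_of_vecMul_eq_zero hdet hsing
  have hm : m ^ 2 = f * r := by simpa [sub_eq_zero] using congrFun hw 0
  have hf : f ^ 2 = m * r := by simpa [sub_eq_zero] using congrFun hw 1
  have hmf : m * f = 0 := by simpa using congrFun hw 2
  rcases mul_eq_zero.1 hmf with rfl | rfl
  · simpa using hf
  · simpa using hm

/-- The `z`-linear part of the identity reads `r (a x + b y) (d x + e y) = c x y`: the tangent
lines `x = 0`, `y = 0` at the node are permuted. -/
theorem nodal_tangent_lines_perm (h3 : (3 : k) ≠ 0) {a b d e p q r c : k}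
    (hdet : (a * e - b * d) * r ≠ 0)
    (hP : ∀ x y z, nodalForm (a * x + b * y) (d * x + e * y) (p * x + q * y + r * z) =
      c * nodalForm x y z) :
    (b = 0 ∧ d = 0) ∨ (a = 0 ∧ e = 0) := by
  simp only [nodalForm] at hP
  have hr : r ≠ 0 := right_ne_zero_of_mul hdet
  have had : a * d = 0 :=
    mul_left_cancel₀ (mul_ne_zero h3 hr) (by linear_combination hP 1 0 0 - hP 1 0 1)
  have hbe : b * e = 0 :=
    mul_left_cancel₀ (mul_ne_zero h3 hr) (by linear_combination hP 0 1 0 - hP 0 1 1)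
  rcases mul_eq_zero.1 had with rfl | rfl
  · have hb : b ≠ 0 := by rintro rfl; simp at hdet
    exact Or.inr ⟨rfl, (mul_eq_zero.1 hbe).resolve_left hb⟩
  · have he : e ≠ 0 := by rintro rfl; simp at hdet
    exact Or.inl ⟨(mul_eq_zero.1 hbe).resolve_right he, rfl⟩

theorem nodal_eq_of_diagonal (h6 : (6 : k) ≠ 0) {a e p q r c : k} (ha : a ≠ 0) (he : e ≠ 0)
    (hP : ∀ x y z, nodalForm (a * x) (e * y) (p * x + q * y + r * z) = c * nodalForm x y z) :
    p = 0 ∧ q = 0 ∧ ∃ ω : k, ω ^ 3 = 1 ∧ e = a * ω ^ 2 ∧ r = a * ω := by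
  simp only [nodalForm] at hP
  have h6ae : 6 * (a * e) ≠ 0 := mul_ne_zero h6 (mul_ne_zero ha he)
  obtain rfl : p = 0 := mul_left_cancel₀ h6ae
    (by linear_combination 2 * hP 0 1 0 - hP 1 1 0 + hP 1 (-1) 0)
  obtain rfl : q = 0 := mul_left_cancel₀ h6ae
    (by linear_combination 2 * hP 1 0 0 - hP 1 1 0 - hP 1 (-1) 0)
  have ha3 : a ^ 3 = c := by linear_combination hP 1 0 0
  have he3 : e ^ 3 = c := by linear_combination hP 0 1 0
  have her : e * r = a ^ 2 := mul_left_cancel₀ (mul_ne_zero h6 ha)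
    (by linear_combination 2 * hP 1 1 0 - 2 * hP 1 1 1 - 6 * ha3)
  have hr3 : r ^ 3 = a ^ 3 := mul_left_cancel₀ (pow_ne_zero 3 he)
    (by linear_combination (e ^ 2 * r ^ 2 + e * r * a ^ 2 + a ^ 4) * her + a ^ 3 * (ha3 - he3))
  have hae : a * e = r ^ 2 := mul_left_cancel₀ (mul_ne_zero he (pow_ne_zero 2 ha))
    (by linear_combination e * r ^ 2 * her - e ^ 2 * hr3)
  refine ⟨rfl, rfl, r / a, ?_, ?_, ?_⟩ <;> field_simp
  · exact hr3
  · linear_combination hae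

theorem exists_smul_eq_of_mem_stabilizerUpToScalar_nodalCubic (h6 : (6 : k) ≠ 0)
    {g : Matrix (Fin 3) (Fin 3) k} (hg : IsUnit g)
    (hmem : g ∈ stabilizerUpToScalar (nodalCubic k)) :
    ∃ s : k, s ≠ 0 ∧ ∃ ω : k, ω ^ 3 = 1 ∧ (g = s • diagonal ![1, ω ^ 2, ω] ∨
      g = s • (!![0, 1, 0; 1, 0, 0; 0, 0, 1] * diagonal ![1, ω ^ 2, ω])) := by
  have h3 : (3 : k) ≠ 0 := fun h => h6 (by linear_combination 2 * h)
  obtain ⟨c, -, hc⟩ := hmem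
  obtain ⟨a, b, m, d, e, f, p, q, r, rfl⟩ :
      ∃ a b m d e f p q r : k, g = !![a, b, m; d, e, f; p, q, r] :=
    ⟨_, _, _, _, _, _, _, _, _, eta_fin_three g⟩
  have hP (x y z : k) : nodalForm (a * x + b * y + m * z) (d * x + e * y + f * z)
      (p * x + q * y + r * z) = c * nodalForm x y z := by
    have := congrArg (eval ![x, y, z]) hc
    rwa [eval_aeval_linSubst_nodalCubic, smul_eval, eval_nodalCubic] at this
  have hdet := ((isUnit_iff_isUnit_det _).1 hg).ne_zero
  obtain ⟨rfl, rfl⟩ := nodal_third_column_eq_zero h6 hdet hP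
  replace hdet : (a * e - b * d) * r ≠ 0 := by
    simpa [det_fin_three, sub_mul] using hdet
  simp only [zero_mul, add_zero] at hP
  rcases nodal_tangent_lines_perm h3 hdet hP with ⟨rfl, rfl⟩ | ⟨rfl, rfl⟩
  · obtain ⟨⟨ha, he⟩, -⟩ : (a ≠ 0 ∧ e ≠ 0) ∧ r ≠ 0 := by simpa using hdet
    obtain ⟨rfl, rfl, ω, hω, rfl, rfl⟩ := nodal_eq_of_diagonal h6 ha he (by simpa using hP)
    refine ⟨a, ha, ω, hω, Or.inl ?_⟩
    ext i j
    fin_cases i <;> fin_cases j <;> simp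
  · obtain ⟨⟨hb, hd⟩, -⟩ : (b ≠ 0 ∧ d ≠ 0) ∧ r ≠ 0 := by simpa using hdet
    obtain ⟨rfl, rfl, ω, hω, rfl, rfl⟩ :=
      nodal_eq_of_diagonal (c := c) (p := p) (q := q) (r := r) h6 hd hb fun x y z => by
        have := hP x y z
        simp only [nodalForm] at this ⊢
        linear_combination this
    refine ⟨d, hd, ω, hω, Or.inr ?_⟩
    ext i j
    fin_cases i <;> fin_cases j <;> simp [vecMul, dotProduct, Fin.sum_univ_three]

theorem IsPrimitiveRoot.exists_diagonal_eq_pow {ζ ω : k} (hζ : IsPrimitiveRoot ζ 3)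
    (hω : ω ^ 3 = 1) : ∃ i < 3, diagonal ![1, ω ^ 2, ω] = diagonal ![1, ζ ^ 2, ζ] ^ i := by
  obtain ⟨i, hi, rfl⟩ := hζ.eq_pow_of_pow_eq_one hω
  refine ⟨i, hi, ?_⟩
  rw [diagonal_pow]
  congr 1
  funext j
  fin_cases j <;> simp [← pow_mul, mul_comm]

open Classical in
noncomputable def nodalStabilizerReps (ζ : k) : Finset (Matrix (Fin 3) (Fin 3) k) :=
  (Finset.range 3).image (diagonal ![1, ζ ^ 2, ζ] ^ ·) ∪
    (Finset.range 3).image (!![0, 1, 0; 1, 0, 0; 0, 0, 1] * diagonal ![1, ζ ^ 2, ζ] ^ ·)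

theorem mem_closure_of_mem_nodalStabilizerReps {ζ : k} {N : Matrix (Fin 3) (Fin 3) k}
    (hN : N ∈ nodalStabilizerReps ζ) :
    N ∈ Submonoid.closure {diagonal ![1, ζ ^ 2, ζ], !![0, 1, 0; 1, 0, 0; 0, 0, 1]} := by
  simp only [nodalStabilizerReps, Finset.mem_union, Finset.mem_image] at hN
  rcases hN with ⟨i, -, rfl⟩ | ⟨i, -, rfl⟩
  · exact pow_mem (Submonoid.subset_closure (.inl rfl)) i
  · exact mul_mem (Submonoid.subset_closure (.inr rfl))
      (pow_mem (Submonoid.subset_closure (.inl rfl)) i)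

theorem closure_le_stabilizerUpToScalar_nodalCubic {ζ : k} (hζ : ζ ^ 3 = 1) :
    Submonoid.closure {diagonal ![1, ζ ^ 2, ζ], !![0, 1, 0; 1, 0, 0; 0, 0, 1]} ≤
      stabilizerUpToScalar (nodalCubic k) := by
  rw [Submonoid.closure_le]
  rintro _ (rfl | rfl)
  exacts [diagonal_mem_stabilizerUpToScalar_nodalCubic hζ,
    swap_mem_stabilizerUpToScalar_nodalCubic]

theorem mem_stabilizerUpToScalar_nodalCubic_iff (h6 : (6 : k) ≠ 0) {ζ : k}
    (hζ : IsPrimitiveRoot ζ 3) {g : Matrix (Fin 3) (Fin 3) k} (hg : IsUnit g) :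
    g ∈ stabilizerUpToScalar (nodalCubic k) ↔
      ∃ N ∈ nodalStabilizerReps ζ, ∃ s : k, s ≠ 0 ∧ g = s • N := by
  refine ⟨fun hmem => ?_, ?_⟩
  · obtain ⟨s, hs, ω, hω, hgω⟩ :=
      exists_smul_eq_of_mem_stabilizerUpToScalar_nodalCubic h6 hg hmem
    obtain ⟨i, hi, hωi⟩ := hζ.exists_diagonal_eq_pow hω
    simp only [nodalStabilizerReps, Finset.mem_union, Finset.mem_image, Finset.mem_range]
    rw [hωi] at hgω
    rcases hgω with rfl | rfl
    exacts [⟨_, .inl ⟨i, hi, rfl⟩, s, hs, rfl⟩, ⟨_, .inr ⟨i, hi, rfl⟩, s, hs, rfl⟩]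
  · rintro ⟨N, hN, s, hs, rfl⟩
    exact (smul_mem_stabilizerUpToScalar_iff isHomogeneous_nodalCubic hs).2
      (closure_le_stabilizerUpToScalar_nodalCubic hζ.pow_eq_one
        (mem_closure_of_mem_nodalStabilizerReps hN))

end

theorem stmt11_general {k : Type*} [Field k]
    (h2 : (2 : k) ≠ 0) (h3 : (3 : k) ≠ 0)
    (ζ : k) (hζ : IsPrimitiveRoot ζ 3) :
    (∀ g : Matrix (Fin 3) (Fin 3) k, IsUnit g →
      ((∃ c : k, c ≠ 0 ∧
          aeval (R := k) (fun i => ∑ j, C (g i j) * X j)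
            (X 0 ^ 3 + X 1 ^ 3 - 3 * (X 0 * X 1 * X 2) : MvPolynomial (Fin 3) k)
          = c • (X 0 ^ 3 + X 1 ^ 3 - 3 * (X 0 * X 1 * X 2) : MvPolynomial (Fin 3) k))
        ↔ ∃ c : k, c ≠ 0 ∧ c • g ∈ Submonoid.closure
            ({Matrix.diagonal ![1, ζ ^ 2, ζ], !![0,1,0;1,0,0;0,0,1]} :
              Set (Matrix (Fin 3) (Fin 3) k)))) ∧
    (∃ T : Finset (Matrix (Fin 3) (Fin 3) k),
      ∀ g : Matrix (Fin 3) (Fin 3) k, IsUnit g →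
        ((∃ c : k, c ≠ 0 ∧
            aeval (R := k) (fun i => ∑ j, C (g i j) * X j)
              (X 0 ^ 3 + X 1 ^ 3 - 3 * (X 0 * X 1 * X 2) : MvPolynomial (Fin 3) k)
            = c • (X 0 ^ 3 + X 1 ^ 3 - 3 * (X 0 * X 1 * X 2) : MvPolynomial (Fin 3) k))
          ↔ ∃ N ∈ T, ∃ c : k, c ≠ 0 ∧ g = c • N)) := by
  have h6 : (6 : k) ≠ 0 := by
    rw [show (6 : k) = 2 * 3 by norm_num]
    exact mul_ne_zero h2 h3
  refine ⟨fun g hg => ⟨fun hmem => ?_, fun ⟨c, hc, hcg⟩ => ?_⟩, nodalStabilizerReps ζ,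
    fun g hg => mem_stabilizerUpToScalar_nodalCubic_iff h6 hζ hg⟩
  · obtain ⟨N, hN, s, hs, rfl⟩ := (mem_stabilizerUpToScalar_nodalCubic_iff h6 hζ hg).1 hmem
    refine ⟨s⁻¹, inv_ne_zero hs, ?_⟩
    rw [inv_smul_smul₀ hs]
    exact mem_closure_of_mem_nodalStabilizerReps hN
  · exact (smul_mem_stabilizerUpToScalar_iff isHomogeneous_nodalCubic hc).1
      (closure_le_stabilizerUpToScalar_nodalCubic hζ.pow_eq_one hcg)

/-- The stabilizer in PGL(3,k) of the nodal cubic C : x₀³ + x₁³ - 3x₀x₁x₂ = 0 is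
generated by g₁ = Diag(1, ζ₃², ζ₃) and g₂ = the swap of x₀ and x₁: an invertible
matrix g preserves C (i.e. F ∘ g = c·F up to a nonzero scalar c) iff, up to a
nonzero scalar, g lies in the (finite) submonoid = subgroup generated by g₁, g₂.
In particular the stabilizer is finite (modulo scalars it is given by a finite
set of matrices). -/
theorem stmt11 {k : Type*} [Field k] [IsAlgClosed k]
    (h2 : (2 : k) ≠ 0) (h3 : (3 : k) ≠ 0)
    (ζ : k) (hζ : IsPrimitiveRoot ζ 3) :
    (∀ g : Matrix (Fin 3) (Fin 3) k, IsUnit g →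
      ((∃ c : k, c ≠ 0 ∧
          aeval (R := k) (fun i => ∑ j, C (g i j) * X j)
            (X 0 ^ 3 + X 1 ^ 3 - 3 * (X 0 * X 1 * X 2) : MvPolynomial (Fin 3) k)
          = c • (X 0 ^ 3 + X 1 ^ 3 - 3 * (X 0 * X 1 * X 2) : MvPolynomial (Fin 3) k))
        ↔ ∃ c : k, c ≠ 0 ∧ c • g ∈ Submonoid.closure
            ({Matrix.diagonal ![1, ζ ^ 2, ζ], !![0,1,0;1,0,0;0,0,1]} :
              Set (Matrix (Fin 3) (Fin 3) k)))) ∧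
    (∃ T : Finset (Matrix (Fin 3) (Fin 3) k),
      ∀ g : Matrix (Fin 3) (Fin 3) k, IsUnit g →
        ((∃ c : k, c ≠ 0 ∧
            aeval (R := k) (fun i => ∑ j, C (g i j) * X j)
              (X 0 ^ 3 + X 1 ^ 3 - 3 * (X 0 * X 1 * X 2) : MvPolynomial (Fin 3) k)
            = c • (X 0 ^ 3 + X 1 ^ 3 - 3 * (X 0 * X 1 * X 2) : MvPolynomial (Fin 3) k))
          ↔ ∃ N ∈ T, ∃ c : k, c ≠ 0 ∧ g = c • N)) :=
  stmt11_general h2 h3 ζ hζ
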